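/- arXiv:2202.07491 — 3 statements merged into one kernel-verified Lean document; each statement's English description precedes it below -/
import Mathlib

section
/- Let (X, μ) be a measure space, 1 ≤ q < ∞, and let A, E ⊂ X be measurable sets with 0 < μ(A) < ∞ and 0 < μ(E) < ∞ such that μ(A ∩ E) ≥ θ μ(E) for some θ > 0. Let u be a function that is integrable on A ∪ E and suppose that for some M ≥ 0, ‖u − u_A‖_{L^q(A)} ≤ M and ‖u − u_E‖_{L^q(E)} ≤ M, where u_A = (1/μ(A)) ∫_A u dμ and u_E = (1/μ(E)) ∫_E u dμ. Then ‖u − u_{A∪E}‖_{L^q(A∪E)} ≤ 4(1 + θ^{−1/q}) M, where u_{A∪E} = (1/μ(A∪E)) ∫_{A∪E} u dμ. -/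
open MeasureTheory Metric Set Filter ENNReal NNReal

noncomputable section

/-- Pointwise Lipschitz constant (as an extended nonnegative real);
it is `0` at isolated points since the limsup is over the punctured neighbourhood filter. -/
def lipConst {X : Type*} [MetricSpace X] (u : X → ℝ) (x : X) : ℝ≥0∞ :=
  Filter.limsup (fun y => ENNReal.ofReal (|u y - u x| / dist y x)) (nhdsWithin x {x}ᶜ)

/-- A real-valued function is Lipschitz (with some constant). -/
def IsLip {X : Type*} [MetricSpace X] (u : X → ℝ) : Prop :=
  ∃ L : NNReal, LipschitzWith L u

/-- A doubling measure on a metric space: balls have positive finite measure and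
`μ(B(x,2r)) ≤ C μ(B(x,r))`. -/
def IsDoubling {X : Type*} [MetricSpace X] [MeasurableSpace X] (μ : Measure X) : Prop :=
  ∃ C : ℝ≥0∞, ∀ (x : X) (r : ℝ), 0 < r →
    0 < μ (ball x r) ∧ μ (ball x r) < ⊤ ∧ μ (ball x (2 * r)) ≤ C * μ (ball x r)

/-- The (q,p)-Poincaré inequality (Lipschitz formulation) with dilation constant `lam`. -/
def PoincareWith {X : Type*} [MetricSpace X] [MeasurableSpace X] (μ : Measure X)
    (q p lam : ℝ) : Prop :=
  ∃ C : ℝ, 0 < C ∧ ∀ (x : X) (r : ℝ), 0 < r → ∀ u : X → ℝ, IsLip u →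
    ((∫⁻ y in ball x r,
        ENNReal.ofReal |u y - ⨍ z in ball x r, u z ∂μ| ^ q ∂μ) / μ (ball x r)) ^ (1 / q)
      ≤ ENNReal.ofReal (C * r) *
        ((∫⁻ y in ball x (lam * r), lipConst u y ^ p ∂μ) / μ (ball x (lam * r))) ^ (1 / p)

/-- `μ` supports a (q,p)-Poincaré inequality (Lipschitz formulation). -/
def SupportsPoincare {X : Type*} [MetricSpace X] [MeasurableSpace X] (μ : Measure X)
    (q p : ℝ) : Prop :=
  ∃ lam : ℝ, 1 ≤ lam ∧ PoincareWith μ q p lam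

/-- The variational p-capacity (Lipschitz formulation) of `E` with respect to `Ω`. -/
def varCap {X : Type*} [MetricSpace X] [MeasurableSpace X] (μ : Measure X) (p : ℝ)
    (E Ω : Set X) : ℝ≥0∞ :=
  ⨅ (u : X → ℝ) (_ : IsLip u ∧ (∀ x ∈ E, u x = 1) ∧ (∀ x ∉ Ω, u x = 0)),
    ∫⁻ x in Ω, lipConst u x ^ p ∂μ

/-- Euclidean n-space. -/
abbrev En (n : ℕ) := EuclideanSpace ℝ (Fin n)

/-- The weighted measure `dμ = w dx`. -/
def wMeasure {n : ℕ} (w : En n → ℝ) : Measure (En n) :=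
  volume.withDensity (fun x => ENNReal.ofReal (w x))

/-- The positive hyperquadrant. -/
def Xplus (n : ℕ) : Set (En n) := {x : En n | ∀ j : Fin n, 0 ≤ x j}

/-- The negative hyperquadrant. -/
def Xminus (n : ℕ) : Set (En n) := {x : En n | ∀ j : Fin n, x j ≤ 0}

/-- The Euclidean bow-tie. -/
def XBow (n : ℕ) : Set (En n) := Xplus n ∪ Xminus n

/-- The restriction of a measure to a subset, as a measure on the subtype. -/
def subMeasure {X : Type*} [MeasurableSpace X] (μ : Measure X) (S : Set X) : Measure S :=
  μ.comap Subtype.val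

/-- The folding map `T(x₁,…,xₙ) = (|x₁|,…,|xₙ|)`. -/
def Tmap {n : ℕ} (x : En n) : En n := WithLp.toLp 2 (fun j => |x j|)

/-- Muckenhoupt A_p condition (for 1 ≤ p < ∞). -/
def IsApWeight {α : Type*} [MetricSpace α] [MeasureSpace α] (p : ℝ) (w : α → ℝ) : Prop :=
  (p = 1 ∧ ∃ C : ℝ, 0 < C ∧ ∀ (x : α) (r : ℝ), 0 < r →
      (⨍ y in ball x r, w y ∂volume) ≤ C * essInf w (volume.restrict (ball x r))) ∨
  (1 < p ∧ ∃ C : ℝ, 0 < C ∧ ∀ (x : α) (r : ℝ), 0 < r →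
      (⨍ y in ball x r, w y ∂volume) *
        (⨍ y in ball x r, w y ^ (1 / (1 - p)) ∂volume) ^ (p - 1) ≤ C)

/-- The surface area ω_{n-1} of the unit sphere in ℝⁿ (with ω₀ = 2),
computed as n times the volume of the unit ball. -/
def sphereArea (n : ℕ) : ℝ := n * (volume (ball (0 : En n) 1)).toReal

/-- The two-sided capacity estimate
`cap_{p,μ}^{X⁺}({0}, B_r ∩ X⁺) ≃ r^{-p} μ(B_r)` for all `r > 0`. -/
def capCondPlus (n : ℕ) (μ : Measure (En n)) (p : ℝ) : Prop :=
  ∃ c : ℝ, 1 ≤ c ∧ ∀ r : ℝ, 0 < r →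
    ENNReal.ofReal c⁻¹ * (μ (ball 0 r) / ENNReal.ofReal (r ^ p)) ≤
      varCap (subMeasure μ (Xplus n)) p {x : Xplus n | (x : En n) = 0}
        (Subtype.val ⁻¹' ball 0 r) ∧
    varCap (subMeasure μ (Xplus n)) p {x : Xplus n | (x : En n) = 0}
        (Subtype.val ⁻¹' ball 0 r) ≤
      ENNReal.ofReal c * (μ (ball 0 r) / ENNReal.ofReal (r ^ p))

/-- `φ(ρ) = max{1, -log ρ}`. -/
def phi (ρ : ℝ) : ℝ := max 1 (-Real.log ρ)

/-!
For every constant `c`, Jensen's and Hölder's inequalities give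
`|u_S - c| μ(S)^{1/q} ≤ ‖u - c‖_{L^q(S)}`; in particular `‖u - u_S‖_{L^q(S)} ≤ 2 ‖u - c‖_{L^q(S)}`,
so it suffices to bound `‖u - u_A‖_{L^q(A ∪ E)}`. Applied on `A ∩ E` with `c = u_A` and `c = u_E`,
the same inequality gives `|u_A - u_E| μ(A ∩ E)^{1/q} ≤ 2M`, and `θ μ(E) ≤ μ(A ∩ E)` turns this into
`‖u_E - u_A‖_{L^q(E)} ≤ 2 θ^{-1/q} M`. Hence `‖u - u_A‖_{L^q(A ∪ E)} ≤ M + M + 2 θ^{-1/q} M`.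
-/

section

variable {α E : Type*} [MeasurableSpace α] [NormedAddCommGroup E] {μ ν : Measure α}
  {p : ℝ≥0∞} {s t : Set α} {f : α → E}

theorem eLpNorm_add_measure_le (hp : 1 ≤ p) :
    eLpNorm f p (μ + ν) ≤ eLpNorm f p μ + eLpNorm f p ν := by
  obtain rfl | hp_top := eq_or_ne p ∞
  · simp only [eLpNorm_exponent_top]
    refine eLpNormEssSup_le_of_ae_enorm_bound ?_
    rw [ae_add_measure_iff]
    exact ⟨ae_le_eLpNormEssSup.mono fun x hx => le_add_right hx,
      ae_le_eLpNormEssSup.mono fun x hx => le_add_left hx⟩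
  have hp₀ : p ≠ 0 := (one_pos.trans_le hp).ne'
  have hp_real : 1 ≤ p.toReal := by simpa using ENNReal.toReal_mono hp_top hp
  simp only [eLpNorm_eq_eLpNorm' hp₀ hp_top, eLpNorm', lintegral_add_measure]
  exact ENNReal.rpow_add_le_add_rpow _ _ (by positivity)
    (div_le_one_of_le₀ hp_real (by positivity))

theorem eLpNorm_sub_const_le (hp : 1 ≤ p) (hf : AEStronglyMeasurable f ν) (c d : E) :
    eLpNorm (fun x => f x - c) p ν ≤
      eLpNorm (fun x => f x - d) p ν + ‖d - c‖ₑ * ν univ ^ (1 / p.toReal) := by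
  obtain rfl | hν := eq_zero_or_neZero ν
  · simp
  calc eLpNorm (fun x => f x - c) p ν
      = eLpNorm ((fun x => f x - d) + fun _ => d - c) p ν := by
        congr 1; ext x; simp
    _ ≤ eLpNorm (fun x => f x - d) p ν + eLpNorm (fun _ => d - c) p ν :=
        eLpNorm_add_le (hf.sub aestronglyMeasurable_const) aestronglyMeasurable_const hp
    _ = _ := by rw [eLpNorm_const _ (one_pos.trans_le hp).ne' hν.out]

theorem eLpNorm_sub_const_restrict_union_le (hp : 1 ≤ p)
    (hf : AEStronglyMeasurable f (μ.restrict t)) (c d : E) :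
    eLpNorm (fun x => f x - c) p (μ.restrict (s ∪ t)) ≤
      eLpNorm (fun x => f x - c) p (μ.restrict s) +
        (eLpNorm (fun x => f x - d) p (μ.restrict t) + ‖d - c‖ₑ * μ t ^ (1 / p.toReal)) := by
  refine (eLpNorm_mono_measure _ (Measure.restrict_union_le s t)).trans <|
    (eLpNorm_add_measure_le hp).trans (add_le_add le_rfl ?_)
  simpa using eLpNorm_sub_const_le hp hf c d

variable [NormedSpace ℝ E]

theorem enorm_average_mul_rpow_le_eLpNorm [IsFiniteMeasure ν] (hp : 1 ≤ p)
    (hf : AEStronglyMeasurable f ν) :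
    ‖⨍ x, f x ∂ν‖ₑ * ν univ ^ (1 / p.toReal) ≤ eLpNorm f p ν := by
  obtain rfl | hν := eq_zero_or_neZero ν
  · simp
  have h₀ : ν univ ≠ 0 := by simpa using hν.out
  have htop : ν univ ≠ ∞ := measure_ne_top ν univ
  have hjensen : ‖⨍ x, f x ∂ν‖ₑ ≤ (ν univ)⁻¹ * eLpNorm f 1 ν := by
    rw [average_eq', eLpNorm_one_eq_lintegral_enorm, ← smul_eq_mul, ← lintegral_smul_measure]
    exact enorm_integral_le_lintegral_enorm f
  have hholder := eLpNorm_le_eLpNorm_mul_rpow_measure_univ hp hf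
  rw [ENNReal.toReal_one, div_one] at hholder
  calc ‖⨍ x, f x ∂ν‖ₑ * ν univ ^ (1 / p.toReal)
      ≤ (ν univ)⁻¹ * (eLpNorm f p ν * ν univ ^ (1 - 1 / p.toReal)) *
          ν univ ^ (1 / p.toReal) := by
        gcongr; exact hjensen.trans (by gcongr)
    _ = eLpNorm f p ν *
          ((ν univ)⁻¹ * (ν univ ^ (1 - 1 / p.toReal) * ν univ ^ (1 / p.toReal))) := by
        ring
    _ = eLpNorm f p ν := by
        rw [← ENNReal.rpow_add _ _ h₀ htop, sub_add_cancel, ENNReal.rpow_one,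
          ENNReal.inv_mul_cancel h₀ htop, mul_one]

variable [CompleteSpace E]

theorem enorm_average_sub_mul_rpow_le_eLpNorm [IsFiniteMeasure ν] [NeZero ν] (hp : 1 ≤ p)
    (hf : Integrable f ν) (c : E) :
    ‖(⨍ x, f x ∂ν) - c‖ₑ * ν univ ^ (1 / p.toReal) ≤ eLpNorm (fun x => f x - c) p ν := by
  have havg : (⨍ x, f x ∂ν) - c = ⨍ x, f x - c ∂ν := by
    rw [average_eq, average_eq, integral_sub hf (integrable_const c), integral_const, smul_sub,
      inv_smul_smul₀ measureReal_univ_ne_zero]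
  rw [havg]
  exact enorm_average_mul_rpow_le_eLpNorm hp
    (hf.aestronglyMeasurable.sub aestronglyMeasurable_const)

theorem eLpNorm_sub_average_le_two_mul [IsFiniteMeasure ν] [NeZero ν] (hp : 1 ≤ p)
    (hf : Integrable f ν) (c : E) :
    eLpNorm (fun x => f x - ⨍ y, f y ∂ν) p ν ≤ 2 * eLpNorm (fun x => f x - c) p ν := by
  calc eLpNorm (fun x => f x - ⨍ y, f y ∂ν) p ν
      ≤ eLpNorm (fun x => f x - c) p ν + ‖c - ⨍ y, f y ∂ν‖ₑ * ν univ ^ (1 / p.toReal) :=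
        eLpNorm_sub_const_le hp hf.aestronglyMeasurable _ _
    _ ≤ eLpNorm (fun x => f x - c) p ν + eLpNorm (fun x => f x - c) p ν := by
        rw [enorm_sub_rev]
        gcongr
        exact enorm_average_sub_mul_rpow_le_eLpNorm hp hf c
    _ = 2 * eLpNorm (fun x => f x - c) p ν := (two_mul _).symm

theorem enorm_setAverage_sub_setAverage_mul_rpow_le (hp : 1 ≤ p) (hst₀ : μ (s ∩ t) ≠ 0)
    (hst : μ (s ∩ t) ≠ ∞) (hf : IntegrableOn f (s ∩ t) μ) :
    ‖(⨍ x in s, f x ∂μ) - ⨍ x in t, f x ∂μ‖ₑ * μ (s ∩ t) ^ (1 / p.toReal) ≤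
      eLpNorm (fun x => f x - ⨍ y in s, f y ∂μ) p (μ.restrict s) +
        eLpNorm (fun x => f x - ⨍ y in t, f y ∂μ) p (μ.restrict t) := by
  have : IsFiniteMeasure (μ.restrict (s ∩ t)) := isFiniteMeasure_restrict.mpr hst
  have : NeZero (μ.restrict (s ∩ t)) := ⟨by simpa using hst₀⟩
  set m := ⨍ x in s ∩ t, f x ∂μ
  have hm {r : Set α} (hr : s ∩ t ⊆ r) (c : E) :
      ‖m - c‖ₑ * μ (s ∩ t) ^ (1 / p.toReal) ≤ eLpNorm (fun x => f x - c) p (μ.restrict r) := by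
    have h := enorm_average_sub_mul_rpow_le_eLpNorm hp hf c
    rw [Measure.restrict_apply_univ] at h
    exact h.trans (eLpNorm_mono_measure _ (Measure.restrict_mono hr le_rfl))
  calc ‖(⨍ x in s, f x ∂μ) - ⨍ x in t, f x ∂μ‖ₑ * μ (s ∩ t) ^ (1 / p.toReal)
      ≤ (‖m - ⨍ x in s, f x ∂μ‖ₑ + ‖m - ⨍ x in t, f x ∂μ‖ₑ) * μ (s ∩ t) ^ (1 / p.toReal) := by
        gcongr
        rw [enorm_sub_rev m, ← edist_eq_enorm_sub, ← edist_eq_enorm_sub, ← edist_eq_enorm_sub]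
        exact edist_triangle _ _ _
    _ ≤ _ := by
        rw [add_mul]
        exact add_le_add (hm inter_subset_left _) (hm inter_subset_right _)

theorem eLpNorm_sub_setAverage_restrict_union_le (hp : 1 ≤ p) {θ : ℝ} (hθ : 0 < θ)
    (ht₀ : μ t ≠ 0) (ht : μ t ≠ ∞) (hst : ENNReal.ofReal θ * μ t ≤ μ (s ∩ t))
    (hf : IntegrableOn f (s ∪ t) μ) :
    eLpNorm (fun x => f x - ⨍ y in s, f y ∂μ) p (μ.restrict (s ∪ t)) ≤
      eLpNorm (fun x => f x - ⨍ y in s, f y ∂μ) p (μ.restrict s) +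
        (eLpNorm (fun x => f x - ⨍ y in t, f y ∂μ) p (μ.restrict t) +
          ENNReal.ofReal θ ^ (-(1 / p.toReal)) *
            (eLpNorm (fun x => f x - ⨍ y in s, f y ∂μ) p (μ.restrict s) +
              eLpNorm (fun x => f x - ⨍ y in t, f y ∂μ) p (μ.restrict t))) := by
  set r := 1 / p.toReal
  set T := ENNReal.ofReal θ ^ (-r) with hT
  have hθ₀ : ENNReal.ofReal θ ≠ 0 := by simpa using hθ
  have hst₀ : μ (s ∩ t) ≠ 0 := (lt_of_lt_of_le (ENNReal.mul_pos hθ₀ ht₀) hst).ne'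
  have ht_le : μ t ^ r ≤ T * μ (s ∩ t) ^ r := by
    calc μ t ^ r = T * (ENNReal.ofReal θ * μ t) ^ r := by
          rw [ENNReal.mul_rpow_of_nonneg _ _ (by positivity), ← mul_assoc, hT, ENNReal.rpow_neg,
            ENNReal.inv_mul_cancel (ENNReal.rpow_pos (pos_iff_ne_zero.2 hθ₀) ofReal_ne_top).ne'
              (ENNReal.rpow_ne_top_of_nonneg (by positivity) ofReal_ne_top), one_mul]
      _ ≤ T * μ (s ∩ t) ^ r := by gcongr
  have hjump := enorm_setAverage_sub_setAverage_mul_rpow_le hp hst₀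
    ((measure_mono inter_subset_right).trans_lt ht.lt_top).ne
    (hf.mono_set (inter_subset_left.trans subset_union_left))
  refine (eLpNorm_sub_const_restrict_union_le hp
    (hf.mono_set subset_union_right).aestronglyMeasurable _ (⨍ y in t, f y ∂μ)).trans
    (add_le_add le_rfl (add_le_add le_rfl ?_))
  calc ‖(⨍ y in t, f y ∂μ) - ⨍ y in s, f y ∂μ‖ₑ * μ t ^ r
      ≤ ‖(⨍ y in t, f y ∂μ) - ⨍ y in s, f y ∂μ‖ₑ * (T * μ (s ∩ t) ^ r) := by gcongr
    _ = T * (‖(⨍ y in s, f y ∂μ) - ⨍ y in t, f y ∂μ‖ₑ * μ (s ∩ t) ^ r) := by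
        rw [enorm_sub_rev]; ring
    _ ≤ _ := by gcongr

end

theorem statement4_general {X : Type*} [MeasurableSpace X] (μ : Measure X)
    (q : ℝ) (hq : 1 ≤ q)
    (A E : Set X)
    (hAfin : μ A < ⊤) (hE0 : 0 < μ E) (hEfin : μ E < ⊤)
    (θ : ℝ) (hθ : 0 < θ) (hAE : ENNReal.ofReal θ * μ E ≤ μ (A ∩ E))
    (u : X → ℝ) (hu : IntegrableOn u (A ∪ E) μ)
    (M : ℝ)
    (hnA : eLpNorm (fun x => u x - ⨍ y in A, u y ∂μ) (ENNReal.ofReal q)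
      (μ.restrict A) ≤ ENNReal.ofReal M)
    (hnE : eLpNorm (fun x => u x - ⨍ y in E, u y ∂μ) (ENNReal.ofReal q)
      (μ.restrict E) ≤ ENNReal.ofReal M) :
    eLpNorm (fun x => u x - ⨍ y in A ∪ E, u y ∂μ) (ENNReal.ofReal q)
      (μ.restrict (A ∪ E)) ≤ ENNReal.ofReal (4 * (1 + θ ^ (-(1 / q))) * M) := by
  have hp : 1 ≤ ENNReal.ofReal q := ENNReal.one_le_ofReal.mpr hq
  have : IsFiniteMeasure (μ.restrict (A ∪ E)) :=
    isFiniteMeasure_restrict.mpr (measure_union_lt_top hAfin hEfin).ne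
  have : NeZero (μ.restrict (A ∪ E)) :=
    ⟨by simpa using fun h => hE0.ne' (measure_mono_null subset_union_right h)⟩
  have hunion := eLpNorm_sub_setAverage_restrict_union_le hp hθ hE0.ne' hEfin.ne hAE hu
  rw [ENNReal.toReal_ofReal (by linarith)] at hunion
  calc eLpNorm (fun x => u x - ⨍ y in A ∪ E, u y ∂μ) (ENNReal.ofReal q) (μ.restrict (A ∪ E))
      ≤ 2 * eLpNorm (fun x => u x - ⨍ y in A, u y ∂μ) (ENNReal.ofReal q) (μ.restrict (A ∪ E)) :=
        eLpNorm_sub_average_le_two_mul hp hu _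
    _ ≤ 2 * (ENNReal.ofReal M + (ENNReal.ofReal M +
          ENNReal.ofReal θ ^ (-(1 / q)) * (ENNReal.ofReal M + ENNReal.ofReal M))) := by
        gcongr 2 * ?_
        exact hunion.trans (by gcongr)
    _ = ENNReal.ofReal (4 * (1 + θ ^ (-(1 / q))) * M) := by
        rw [ENNReal.ofReal_mul (by positivity), ENNReal.ofReal_mul (by norm_num),
          ENNReal.ofReal_add zero_le_one (by positivity), ← ENNReal.ofReal_rpow_of_pos hθ,
          ENNReal.ofReal_one, ENNReal.ofReal_ofNat]
        ring

theorem statement4 {X : Type*} [MeasurableSpace X] (μ : Measure X)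
    (q : ℝ) (hq : 1 ≤ q)
    (A E : Set X) (hA : MeasurableSet A) (hE : MeasurableSet E)
    (hA0 : 0 < μ A) (hAfin : μ A < ⊤) (hE0 : 0 < μ E) (hEfin : μ E < ⊤)
    (θ : ℝ) (hθ : 0 < θ) (hAE : ENNReal.ofReal θ * μ E ≤ μ (A ∩ E))
    (u : X → ℝ) (hu : IntegrableOn u (A ∪ E) μ)
    (M : ℝ) (hM : 0 ≤ M)
    (hnA : eLpNorm (fun x => u x - ⨍ y in A, u y ∂μ) (ENNReal.ofReal q)
      (μ.restrict A) ≤ ENNReal.ofReal M)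
    (hnE : eLpNorm (fun x => u x - ⨍ y in E, u y ∂μ) (ENNReal.ofReal q)
      (μ.restrict E) ≤ ENNReal.ofReal M) :
    eLpNorm (fun x => u x - ⨍ y in A ∪ E, u y ∂μ) (ENNReal.ofReal q)
      (μ.restrict (A ∪ E)) ≤ ENNReal.ofReal (4 * (1 + θ ^ (-(1 / q))) * M) :=
  statement4_general μ q hq A E hAfin hE0 hEfin θ hθ hAE u hu M hnA hnE
end
end

section
/- Let n ≥ 1, 1 ≤ q < ∞, 1 ≤ p < ∞, and let w be a T-invariant weight on ℝⁿ with dμ = w dx satisfying 0 < μ(B) < ∞ for all balls B. If μ supports a (q,p)-Poincaré inequality (Lipschitz formulation) on ℝⁿ with dilation constant λ, then the restriction of μ to the positive hyperquadrant X⁺ supports a (q,p)-Poincaré inequality on X⁺ with the same dilation constant λ. -/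
open MeasureTheory Metric Set Filter ENNReal NNReal

noncomputable section

/-!
Since `w = w ∘ T`, the measure `μ` is invariant under each of the `2ⁿ` coordinate sign changes,
and a sign change agrees with the folding map `T` on the quadrant it maps into `X⁺`. Hence
`∫_B F ∘ T dμ ≤ 2ⁿ ∫_{B ∩ X⁺} F dμ` for every ball `B` centred in `X⁺`; in particular
`μ(B) ≤ 2ⁿ μ(B ∩ X⁺)`. A Lipschitz function `u` on `X⁺` extends to `u ∘ T` on `ℝⁿ`, and
`lip (u ∘ T) ≤ (lip u) ∘ T` because `T` is `1`-Lipschitz. Apply the Poincaré inequality on `ℝⁿ`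
to `u ∘ T`: folding bounds its gradient side over `λB` by `2ⁿ` times the one of `u` over
`λB ∩ X⁺`, while the oscillation of `u` on `B ∩ X⁺` about its own mean is at most `2^q` times its
oscillation about the mean of `u ∘ T` on `B`, which is part of the oscillation of `u ∘ T` on `B`.
-/

open Topology

lemma lipConst_comp_le {X Y : Type*} [MetricSpace X] [MetricSpace Y] {f : X → Y}
    (hf : LipschitzWith 1 f) (u : Y → ℝ) (x : X) :
    lipConst (u ∘ f) x ≤ lipConst u (f x) := by
  set F : Y → ℝ≥0∞ := fun y => ENNReal.ofReal (|u y - u (f x)| / dist y (f x))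
  have hFx : F (f x) = 0 := by simp [F]
  have hquot : ∀ z, ENNReal.ofReal (|u (f z) - u (f x)| / dist z x) ≤ F (f z) := fun z => by
    refine ENNReal.ofReal_le_ofReal ?_
    rcases eq_or_ne (f z) (f x) with h | h
    · simp [h]
    · exact div_le_div_of_nonneg_left (abs_nonneg _) (dist_pos.2 h)
        (by simpa using hf.dist_le_mul z x)
  have hmap : map f (𝓝[≠] x) ≤ 𝓝 (f x) :=
    (hf.continuous.tendsto x).mono_left nhdsWithin_le_nhds
  calc lipConst (u ∘ f) x ≤ limsup (F ∘ f) (𝓝[≠] x) :=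
        limsup_le_limsup (Eventually.of_forall hquot)
    _ ≤ limsup F (𝓝 (f x)) := by
        rw [limsup_comp]
        exact limsup_le_limsup_of_le hmap
    _ ≤ lipConst u (f x) := by
        rw [← nhdsNE_sup_pure, limsup_sup_filter]
        refine sup_le le_rfl (limsup_le_of_le (by isBoundedDefault) ?_)
        simp [hFx]

lemma ENNReal.div_le_mul_div_of_le_mul {a b d k : ℝ≥0∞} (hk0 : k ≠ 0) (hk : k ≠ ⊤)
    (h : d ≤ k * b) : a / b ≤ k * (a / d) := by
  rw [← ENNReal.mul_div_mul_left a b hk0 hk, mul_div_assoc]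
  gcongr

lemma average_sub_const {α : Type*} [MeasurableSpace α] {ρ : Measure α} [IsFiniteMeasure ρ]
    [NeZero ρ] {f : α → ℝ} (hf : Integrable f ρ) (c : ℝ) :
    ⨍ y, (f y - c) ∂ρ = ⨍ y, f y ∂ρ - c := by
  have hρ : ρ.real univ ≠ 0 := by
    simp [measureReal_def, ENNReal.toReal_eq_zero_iff, NeZero.ne ρ]
  rw [average_eq, average_eq, integral_sub hf (integrable_const c), integral_const, smul_sub,
    inv_smul_smul₀ hρ]

lemma abs_average_sub_rpow_le {α : Type*} [MeasurableSpace α] {ρ : Measure α}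
    [IsFiniteMeasure ρ] [NeZero ρ] {q : ℝ} (hq : 1 ≤ q) {f : α → ℝ}
    (hf : MemLp f (ENNReal.ofReal q) ρ) (a : ℝ) :
    |⨍ y, f y ∂ρ - a| ^ q ≤ ⨍ y, |f y - a| ^ q ∂ρ := by
  have hq0 : 0 ≤ q := zero_le_one.trans hq
  have hfa : MemLp (fun y => f y - a) (ENNReal.ofReal q) ρ := hf.sub (memLp_const a)
  have hint : Integrable (fun y => f y - a) ρ := hfa.integrable (ENNReal.one_le_ofReal.2 hq)
  have hint_rpow : Integrable (fun y => |f y - a| ^ q) ρ := by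
    simpa [ENNReal.toReal_ofReal hq0] using
      hfa.integrable_norm_rpow (by simp; linarith) ENNReal.ofReal_ne_top
  calc |⨍ y, f y ∂ρ - a| ^ q = |⨍ y, (f y - a) ∂ρ| ^ q := by
        rw [average_sub_const (hf.integrable (ENNReal.one_le_ofReal.2 hq))]
    _ ≤ (⨍ y, |f y - a| ∂ρ) ^ q := by
        gcongr
        simpa only [average, Real.norm_eq_abs] using
          norm_integral_le_integral_norm (μ := (ρ univ)⁻¹ • ρ) (fun y => f y - a)
    _ ≤ ⨍ y, |f y - a| ^ q ∂ρ :=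
        (convexOn_rpow hq).map_average_le (continuousOn_id.rpow_const fun _ _ => Or.inr hq0)
          isClosed_Ici (Eventually.of_forall fun _ => mem_Ici.2 (abs_nonneg _)) hint.abs hint_rpow

lemma lintegral_abs_sub_average_rpow_le {α : Type*} [MeasurableSpace α] {ρ : Measure α}
    [IsFiniteMeasure ρ] {q : ℝ} (hq : 1 ≤ q) {f : α → ℝ}
    (hf : MemLp f (ENNReal.ofReal q) ρ) (a : ℝ) :
    ∫⁻ x, ENNReal.ofReal |f x - ⨍ y, f y ∂ρ| ^ q ∂ρ
      ≤ 2 ^ q * ∫⁻ x, ENNReal.ofReal |f x - a| ^ q ∂ρ := by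
  rcases eq_zero_or_neZero ρ with rfl | _
  · simp
  have hq0 : 0 ≤ q := zero_le_one.trans hq
  set b := ⨍ y, f y ∂ρ
  set I := ∫⁻ x, ENNReal.ofReal |f x - a| ^ q ∂ρ
  have hint_rpow : Integrable (fun y => |f y - a| ^ q) ρ := by
    simpa [ENNReal.toReal_ofReal hq0] using
      (hf.sub (memLp_const a)).integrable_norm_rpow (by simp; linarith) ENNReal.ofReal_ne_top
  have hmean : ENNReal.ofReal |b - a| ^ q * ρ univ ≤ I := by
    rw [← ENNReal.le_div_iff_mul_le (Or.inl (NeZero.ne _)) (Or.inl (measure_ne_top _ _)),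
      ENNReal.ofReal_rpow_of_nonneg (abs_nonneg _) hq0]
    calc ENNReal.ofReal (|b - a| ^ q) ≤ ENNReal.ofReal (⨍ y, |f y - a| ^ q ∂ρ) :=
          ENNReal.ofReal_le_ofReal (abs_average_sub_rpow_le hq hf a)
      _ = I / ρ univ := by
          rw [ofReal_average hint_rpow (Eventually.of_forall fun _ => by positivity)]
          simp_rw [I, ENNReal.ofReal_rpow_of_nonneg (abs_nonneg _) hq0]
  have hpoint : ∀ x, ENNReal.ofReal |f x - b| ^ q
      ≤ 2 ^ (q - 1) * (ENNReal.ofReal |f x - a| ^ q + ENNReal.ofReal |b - a| ^ q) := fun x =>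
    calc ENNReal.ofReal |f x - b| ^ q
        ≤ (ENNReal.ofReal |f x - a| + ENNReal.ofReal |b - a|) ^ q := by
          rw [← ENNReal.ofReal_add (abs_nonneg _) (abs_nonneg _)]
          gcongr
          exact (abs_sub_le _ a _).trans_eq (by rw [abs_sub_comm a])
      _ ≤ _ := ENNReal.rpow_add_le_mul_rpow_add_rpow _ _ hq
  calc ∫⁻ x, ENNReal.ofReal |f x - b| ^ q ∂ρ
      ≤ ∫⁻ x, 2 ^ (q - 1) * (ENNReal.ofReal |f x - a| ^ q + ENNReal.ofReal |b - a| ^ q) ∂ρ :=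
        lintegral_mono hpoint
    _ = 2 ^ (q - 1) * (I + ENNReal.ofReal |b - a| ^ q * ρ univ) := by
        rw [lintegral_const_mul' _ _ (by simp), lintegral_add_right _ measurable_const,
          lintegral_const]
    _ ≤ 2 ^ (q - 1) * (I + I) := by gcongr
    _ = 2 ^ (q - 1) * 2 ^ (1 : ℝ) * I := by rw [ENNReal.rpow_one, ← two_mul, mul_assoc]
    _ = 2 ^ q * I := by rw [← ENNReal.rpow_add _ _ two_ne_zero ofNat_ne_top, sub_add_cancel]

lemma LipschitzWith.memLp_restrict_ball {X : Type*} [MetricSpace X] [MeasurableSpace X]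
    [OpensMeasurableSpace X] {μ : Measure X} {x : X} {r : ℝ}
    [IsFiniteMeasure (μ.restrict (ball x r))] {L : ℝ≥0} {u : X → ℝ} (hu : LipschitzWith L u)
    (p : ℝ≥0∞) : MemLp u p (μ.restrict (ball x r)) := by
  refine MemLp.of_bound hu.continuous.aestronglyMeasurable (‖u x‖ + L * r)
    (ae_restrict_of_forall_mem measurableSet_ball fun z hz => ?_)
  calc ‖u z‖ ≤ ‖u x‖ + ‖u z - u x‖ := norm_le_insert' _ _
    _ ≤ ‖u x‖ + L * r := by
        gcongr
        rw [← dist_eq_norm]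
        exact (hu.dist_le_mul z x).trans (by gcongr; exact (mem_ball.1 hz).le)

lemma setLIntegral_subMeasure_ball {X : Type*} [MetricSpace X] [MeasurableSpace X]
    (μ : Measure X) {S : Set X} (hS : MeasurableSet S) (x : S) (r : ℝ) (F : X → ℝ≥0∞) :
    ∫⁻ z in ball x r, F z ∂(subMeasure μ S) = ∫⁻ y in S ∩ ball (x : X) r, F y ∂μ := by
  rw [subMeasure, setLIntegral_subtype hS, ← Subtype.image_preimage_coe S (ball (x : X) r)]
  rfl

lemma MeasureTheory.MeasurePreserving.withDensity_of_comp_eq {α : Type*} [MeasurableSpace α]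
    {μ : Measure α} {g : α → α} (hg : MeasurePreserving g μ μ) (hge : MeasurableEmbedding g)
    {f : α → ℝ≥0∞} (hf : ∀ x, f (g x) = f x) :
    MeasurePreserving g (μ.withDensity f) (μ.withDensity f) := by
  refine ⟨hge.measurable, Measure.ext fun A hA => ?_⟩
  rw [Measure.map_apply hge.measurable hA, withDensity_apply _ (hge.measurable hA),
    withDensity_apply _ hA, ← hg.setLIntegral_comp_preimage_emb hge f A]
  simp only [hf]

/- `PoincareWith μ q p lam` unfolds to `oscMean μ q (ball x r) u ^ (1 / q)
≤ ENNReal.ofReal (C * r) * lipMean μ p (ball x (lam * r)) u ^ (1 / p)`. -/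

def oscMean {X : Type*} [MeasurableSpace X] (μ : Measure X) (q : ℝ) (B : Set X)
    (u : X → ℝ) : ℝ≥0∞ :=
  (∫⁻ y in B, ENNReal.ofReal |u y - ⨍ z in B, u z ∂μ| ^ q ∂μ) / μ B

def lipMean {X : Type*} [MetricSpace X] [MeasurableSpace X] (μ : Measure X) (p : ℝ)
    (B : Set X) (u : X → ℝ) : ℝ≥0∞ :=
  (∫⁻ y in B, lipConst u y ^ p ∂μ) / μ B

lemma PoincareWith.of_transfer {X Y : Type*} [MetricSpace X] [MeasurableSpace X]
    [MetricSpace Y] [MeasurableSpace Y] {μ : Measure X} {ν : Measure Y} {q p lam : ℝ}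
    (h : PoincareWith μ q p lam) (hq : 0 < q) (hp : 0 < p) {a b : ℝ≥0∞} (ha0 : a ≠ 0)
    (ha : a ≠ ⊤) (hb0 : b ≠ 0) (hb : b ≠ ⊤)
    (htr : ∀ (y : Y) (r : ℝ), 0 < r → ∀ u : Y → ℝ, IsLip u → ∃ (x : X) (U : X → ℝ), IsLip U ∧
      oscMean ν q (ball y r) u ≤ a * oscMean μ q (ball x r) U ∧
      lipMean μ p (ball x (lam * r)) U ≤ b * lipMean ν p (ball y (lam * r)) u) :
    PoincareWith ν q p lam := by
  obtain ⟨C, hC, hPI⟩ := h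
  have hq' : 0 ≤ 1 / q := by positivity
  have hp' : 0 ≤ 1 / p := by positivity
  set K := a ^ (1 / q) * b ^ (1 / p)
  have hK : K ≠ ⊤ := by finiteness
  have hK0 : K ≠ 0 := by positivity
  refine ⟨K.toReal * C, mul_pos (ENNReal.toReal_pos hK0 hK) hC, fun y r hr u hu => ?_⟩
  obtain ⟨x, U, hU, hosc, hlip⟩ := htr y r hr u hu
  calc oscMean ν q (ball y r) u ^ (1 / q)
      ≤ (a * oscMean μ q (ball x r) U) ^ (1 / q) := by gcongr
    _ = a ^ (1 / q) * oscMean μ q (ball x r) U ^ (1 / q) := ENNReal.mul_rpow_of_nonneg _ _ hq'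
    _ ≤ a ^ (1 / q) * (ENNReal.ofReal (C * r) * lipMean μ p (ball x (lam * r)) U ^ (1 / p)) := by
        gcongr
        exact hPI x r hr U hU
    _ ≤ a ^ (1 / q) * (ENNReal.ofReal (C * r) *
          (b * lipMean ν p (ball y (lam * r)) u) ^ (1 / p)) := by gcongr
    _ = ENNReal.ofReal (K.toReal * C * r) * lipMean ν p (ball y (lam * r)) u ^ (1 / p) := by
        rw [ENNReal.mul_rpow_of_nonneg _ _ hp', mul_assoc, ENNReal.ofReal_mul ENNReal.toReal_nonneg,
          ENNReal.ofReal_toReal hK]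
        ring

section Folding

variable {n : ℕ}

lemma isClosed_Xplus : IsClosed (Xplus n) := by
  simp only [Xplus, ofPred_forall]
  exact isClosed_iInter fun j => isClosed_le continuous_const (by fun_prop)

lemma Tmap_apply (y : En n) (j : Fin n) : Tmap y j = |y j| := rfl

lemma Tmap_mem_Xplus (y : En n) : Tmap y ∈ Xplus n := fun j => abs_nonneg (y j)

lemma Tmap_of_mem_Xplus {x : En n} (hx : x ∈ Xplus n) : Tmap x = x := by
  ext j
  exact abs_of_nonneg (hx j)

lemma lipschitzWith_one_Tmap : LipschitzWith 1 (Tmap (n := n)) := by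
  refine LipschitzWith.of_dist_le_mul fun x y => ?_
  rw [EuclideanSpace.dist_eq, EuclideanSpace.dist_eq, NNReal.coe_one, one_mul]
  gcongr with j
  simpa only [Tmap_apply, Real.dist_eq] using abs_abs_sub_abs_le_abs_sub (x j) (y j)

lemma Tmap_mem_ball {x y : En n} (hx : x ∈ Xplus n) {r : ℝ} (hy : y ∈ ball x r) :
    Tmap y ∈ ball x r := by
  rw [mem_ball, ← Tmap_of_mem_Xplus hx]
  exact (lipschitzWith_one_Tmap.dist_le_mul y x).trans_lt (by simpa using hy)

def signFlip (ε : Fin n → Bool) : En n ≃ₗᵢ[ℝ] En n :=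
  LinearIsometryEquiv.piLpCongrRight 2 fun j =>
    if ε j then LinearIsometryEquiv.refl ℝ ℝ else LinearIsometryEquiv.neg ℝ

lemma signFlip_apply (ε : Fin n → Bool) (y : En n) (j : Fin n) :
    signFlip ε y j = if ε j then y j else -y j := by
  simp only [signFlip, LinearIsometryEquiv.piLpCongrRight_apply]
  split_ifs <;> rfl

lemma Tmap_signFlip (ε : Fin n → Bool) (y : En n) : Tmap (signFlip ε y) = Tmap y := by
  ext j
  simp only [Tmap_apply, signFlip_apply]
  split_ifs <;> simp

lemma signFlip_eq_Tmap {ε : Fin n → Bool} {y : En n} (hy : signFlip ε y ∈ Xplus n) :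
    signFlip ε y = Tmap y := by
  rw [← Tmap_signFlip ε y, Tmap_of_mem_Xplus hy]

lemma exists_signFlip_mem_Xplus (y : En n) : ∃ ε, signFlip ε y ∈ Xplus n :=
  ⟨fun j => decide (0 ≤ y j), fun j => by
    rw [signFlip_apply]
    split_ifs with h
    · simpa using h
    · simp only [decide_eq_true_eq] at h
      linarith⟩

lemma measurePreserving_signFlip_wMeasure {w : En n → ℝ} (hT : ∀ x, w (Tmap x) = w x)
    (ε : Fin n → Bool) : MeasurePreserving (signFlip ε) (wMeasure w) (wMeasure w) :=
  (signFlip ε).measurePreserving.withDensity_of_comp_eq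
    (signFlip ε).toHomeomorph.toMeasurableEquiv.measurableEmbedding
    fun y => by rw [← hT, Tmap_signFlip, hT]

/-- Folding by `T` covers each point of `X⁺` at most `2ⁿ` times, once for each sign pattern. -/
lemma setLIntegral_comp_Tmap_le {μ : Measure (En n)}
    (hμ : ∀ ε, MeasurePreserving (signFlip ε) μ μ) {x : En n} (hx : x ∈ Xplus n) (r : ℝ)
    (F : En n → ℝ≥0∞) :
    ∫⁻ y in ball x r, F (Tmap y) ∂μ ≤ 2 ^ n * ∫⁻ y in Xplus n ∩ ball x r, F y ∂μ := by
  set A := Xplus n ∩ ball x r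
  have hcover : ball x r ⊆ ⋃ ε, signFlip ε ⁻¹' A := fun y hy => by
    obtain ⟨ε, hε⟩ := exists_signFlip_mem_Xplus y
    exact mem_iUnion.2 ⟨ε, hε, by rw [signFlip_eq_Tmap hε]; exact Tmap_mem_ball hx hy⟩
  have hpiece : ∀ ε, ∫⁻ y in signFlip ε ⁻¹' A, F (Tmap y) ∂μ = ∫⁻ y in A, F y ∂μ := fun ε => by
    refine (setLIntegral_congr_fun ((signFlip ε).continuous.measurable
      (isClosed_Xplus.measurableSet.inter measurableSet_ball)) fun y hy => ?_).trans
      ((hμ ε).setLIntegral_comp_preimage_emb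
        (signFlip ε).toHomeomorph.toMeasurableEquiv.measurableEmbedding F A)
    rw [signFlip_eq_Tmap hy.1]
  calc ∫⁻ y in ball x r, F (Tmap y) ∂μ ≤ ∫⁻ y in ⋃ ε, signFlip ε ⁻¹' A, F (Tmap y) ∂μ :=
        lintegral_mono_set hcover
    _ ≤ ∑' ε, ∫⁻ y in signFlip ε ⁻¹' A, F (Tmap y) ∂μ := lintegral_iUnion_le _ _
    _ = 2 ^ n * ∫⁻ y in A, F y ∂μ := by simp [hpiece, tsum_fintype, Finset.card_univ]

def foldXplus (y : En n) : Xplus n := ⟨Tmap y, Tmap_mem_Xplus y⟩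

lemma lipschitzWith_one_foldXplus : LipschitzWith 1 (foldXplus (n := n)) :=
  lipschitzWith_one_Tmap.subtype_mk _

lemma foldXplus_coe (z : Xplus n) : foldXplus (z : En n) = z :=
  Subtype.ext (Tmap_of_mem_Xplus z.2)

lemma foldXplus_Tmap (y : En n) : foldXplus (Tmap y) = foldXplus y :=
  foldXplus_coe (foldXplus y)

lemma setLIntegral_subMeasure_Xplus_le (μ : Measure (En n)) (x : Xplus n) (r : ℝ)
    (G : Xplus n → ℝ≥0∞) :
    ∫⁻ z in ball x r, G z ∂(subMeasure μ (Xplus n))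
      ≤ ∫⁻ y in ball (x : En n) r, G (foldXplus y) ∂μ :=
  calc ∫⁻ z in ball x r, G z ∂(subMeasure μ (Xplus n))
      = ∫⁻ z in ball x r, G (foldXplus z) ∂(subMeasure μ (Xplus n)) := by
        simp only [foldXplus_coe]
    _ = ∫⁻ y in Xplus n ∩ ball (x : En n) r, G (foldXplus y) ∂μ :=
        setLIntegral_subMeasure_ball μ isClosed_Xplus.measurableSet x r (G ∘ foldXplus)
    _ ≤ _ := lintegral_mono_set inter_subset_right

lemma setLIntegral_comp_foldXplus_le {μ : Measure (En n)}
    (hμ : ∀ ε, MeasurePreserving (signFlip ε) μ μ) (x : Xplus n) (r : ℝ)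
    (G : Xplus n → ℝ≥0∞) :
    ∫⁻ y in ball (x : En n) r, G (foldXplus y) ∂μ
      ≤ 2 ^ n * ∫⁻ z in ball x r, G z ∂(subMeasure μ (Xplus n)) :=
  calc ∫⁻ y in ball (x : En n) r, G (foldXplus y) ∂μ
      = ∫⁻ y in ball (x : En n) r, (G ∘ foldXplus) (Tmap y) ∂μ := by
        simp only [Function.comp_apply, foldXplus_Tmap]
    _ ≤ 2 ^ n * ∫⁻ y in Xplus n ∩ ball (x : En n) r, (G ∘ foldXplus) y ∂μ :=
        setLIntegral_comp_Tmap_le hμ x.2 r _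
    _ = _ := by
        rw [← setLIntegral_subMeasure_ball μ isClosed_Xplus.measurableSet]
        simp only [Function.comp_apply, foldXplus_coe]

lemma measure_ball_subMeasure_Xplus_le (μ : Measure (En n)) (x : Xplus n) (r : ℝ) :
    subMeasure μ (Xplus n) (ball x r) ≤ μ (ball (x : En n) r) := by
  simpa using setLIntegral_subMeasure_Xplus_le μ x r 1

lemma measure_ball_le_subMeasure_Xplus {μ : Measure (En n)}
    (hμ : ∀ ε, MeasurePreserving (signFlip ε) μ μ) (x : Xplus n) (r : ℝ) :
    μ (ball (x : En n) r) ≤ 2 ^ n * subMeasure μ (Xplus n) (ball x r) := by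
  simpa using setLIntegral_comp_foldXplus_le hμ x r 1

lemma oscMean_subMeasure_Xplus_le {μ : Measure (En n)}
    (hμ : ∀ ε, MeasurePreserving (signFlip ε) μ μ) (x : Xplus n) (r : ℝ) {q : ℝ} (hq : 1 ≤ q)
    (hfin : μ (ball (x : En n) r) ≠ ⊤) {L : ℝ≥0} {u : Xplus n → ℝ} (hu : LipschitzWith L u) :
    oscMean (subMeasure μ (Xplus n)) q (ball x r) u
      ≤ 2 ^ q * 2 ^ n * oscMean μ q (ball (x : En n) r) (u ∘ foldXplus) := by
  set ν := subMeasure μ (Xplus n)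
  have : IsFiniteMeasure (ν.restrict (ball x r)) :=
    ⟨by simpa using (measure_ball_subMeasure_Xplus_le μ x r).trans_lt hfin.lt_top⟩
  set a := ⨍ y in ball (x : En n) r, u (foldXplus y) ∂μ
  set I := ∫⁻ y in ball (x : En n) r, ENNReal.ofReal |u (foldXplus y) - a| ^ q ∂μ
  have hnum := (lintegral_abs_sub_average_rpow_le hq (hu.memLp_restrict_ball _) a).trans
    (mul_le_mul_right (setLIntegral_subMeasure_Xplus_le μ x r
      fun z => ENNReal.ofReal |u z - a| ^ q) _)
  calc oscMean ν q (ball x r) u ≤ 2 ^ q * I / ν (ball x r) := by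
        unfold oscMean
        gcongr
    _ = 2 ^ q * (I / ν (ball x r)) := mul_div_assoc ..
    _ ≤ 2 ^ q * (2 ^ n * (I / μ (ball (x : En n) r))) := by
        gcongr
        exact ENNReal.div_le_mul_div_of_le_mul (by simp) (by simp)
          (measure_ball_le_subMeasure_Xplus hμ x r)
    _ = _ := by
        rw [mul_assoc]
        rfl

lemma lipMean_comp_foldXplus_le {μ : Measure (En n)}
    (hμ : ∀ ε, MeasurePreserving (signFlip ε) μ μ) (x : Xplus n) (r : ℝ) {p : ℝ} (hp : 0 ≤ p)
    (u : Xplus n → ℝ) :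
    lipMean μ p (ball (x : En n) r) (u ∘ foldXplus)
      ≤ 2 ^ n * lipMean (subMeasure μ (Xplus n)) p (ball x r) u := by
  have hnum : ∫⁻ y in ball (x : En n) r, lipConst (u ∘ foldXplus) y ^ p ∂μ
      ≤ 2 ^ n * ∫⁻ z in ball x r, lipConst u z ^ p ∂(subMeasure μ (Xplus n)) :=
    (lintegral_mono fun y => ENNReal.rpow_le_rpow
      (lipConst_comp_le lipschitzWith_one_foldXplus u y) hp).trans
      (setLIntegral_comp_foldXplus_le hμ x r fun z => lipConst u z ^ p)
  rw [lipMean, lipMean, ← mul_div_assoc]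
  exact ENNReal.div_le_div hnum (measure_ball_subMeasure_Xplus_le μ x r)

end Folding

theorem statement5_general (n : ℕ) (q p : ℝ) (hq : 1 ≤ q) (hp : 1 ≤ p)
    (w : En n → ℝ) (hT : ∀ x, w (Tmap x) = w x)
    (hballs : ∀ (x : En n) (r : ℝ), 0 < r →
      0 < wMeasure w (ball x r) ∧ wMeasure w (ball x r) < ⊤)
    (lam : ℝ)
    (hPI : PoincareWith (wMeasure w) q p lam) :
    PoincareWith (subMeasure (wMeasure w) (Xplus n)) q p lam := by
  have hμ := measurePreserving_signFlip_wMeasure hT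
  refine hPI.of_transfer (a := 2 ^ q * 2 ^ n) (b := 2 ^ n) (by positivity) (by positivity)
    (by positivity) (by finiteness) (by positivity) (by finiteness) ?_
  rintro x r hr u ⟨L, hu⟩
  exact ⟨x, u ∘ foldXplus, ⟨L * 1, hu.comp lipschitzWith_one_foldXplus⟩,
    oscMean_subMeasure_Xplus_le hμ x r hq (hballs x r hr).2.ne hu,
    lipMean_comp_foldXplus_le hμ x (lam * r) (by positivity) u⟩

theorem statement5 (n : ℕ) (hn : 1 ≤ n) (q p : ℝ) (hq : 1 ≤ q) (hp : 1 ≤ p)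
    (w : En n → ℝ) (hT : ∀ x, w (Tmap x) = w x)
    (hw0 : ∀ x, 0 ≤ w x) (hloc : LocallyIntegrable w volume)
    (hballs : ∀ (x : En n) (r : ℝ), 0 < r →
      0 < wMeasure w (ball x r) ∧ wMeasure w (ball x r) < ⊤)
    (lam : ℝ) (hlam : 1 ≤ lam)
    (hPI : PoincareWith (wMeasure w) q p lam) :
    PoincareWith (subMeasure (wMeasure w) (Xplus n)) q p lam :=
  statement5_general n q p hq hp w hT hballs lam hPI
end
end

section
/- Let n ≥ 1, α > −n and β ∈ ℝ, and let w(x) = |x|^α φ(|x|)^β be a weight on ℝⁿ, where φ(ρ) = max{1, −log ρ}. Then w is an A₁-weight on ℝⁿ if and only if α < 0, or α = 0 and β ≥ 0. -/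
open MeasureTheory Metric Set Filter ENNReal NNReal

noncomputable section

/-!
Write `w x = f ‖x‖` with `f = powPhi α β`. Since `φ` varies only logarithmically,
`s ^ γ * f s` is quasi-increasing as soon as `0 < γ + α`, and `f` itself is quasi-decreasing
when `α < 0`, or `α = 0` and `0 ≤ β`. With `0 ≤ γ < n` the first property makes `w`
integrable near the origin with `⨍_{B(0,R)} w ≲ f R`; together with the second it bounds the
average of `w` over `B(x₀, r)` by a multiple of `f (‖x₀‖ + r)`, which is in turn
`≲ ess inf_{B(x₀,r)} w`. Conversely, if `0 < α`, or `α = 0` and `β < 0`, then `f s → 0` as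
`s → 0⁺`, so the essential infimum of `w` on the unit ball vanishes while its average there
is positive.
-/

open Real Topology Module

lemma one_le_phi (ρ : ℝ) : 1 ≤ phi ρ := le_max_left _ _

lemma phi_pos (ρ : ℝ) : 0 < phi ρ := one_pos.trans_le (one_le_phi ρ)

lemma phi_one : phi 1 = 1 := by simp [phi]

lemma phi_le_phi {s t : ℝ} (hs : 0 < s) (hst : s ≤ t) : phi t ≤ phi s :=
  max_le_max le_rfl (neg_le_neg (log_le_log hs hst))

lemma phi_le_one_add_log_mul_phi {s t : ℝ} (hs : 0 < s) (hst : s ≤ t) :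
    phi s ≤ (1 + log (t / s)) * phi t := by
  have hL : 0 ≤ log (t / s) := log_nonneg ((one_le_div hs).2 hst)
  have hlog : -log s = -log t + log (t / s) := by
    rw [log_div (hs.trans_le hst).ne' hs.ne']; ring
  have h1 := one_le_phi t
  have h2 : -log t ≤ phi t := le_max_right _ _
  apply max_le <;> nlinarith

lemma rpow_le_rpow_abs_mul_rpow {a b L : ℝ} (ha : 0 < a) (hb : 0 < b) (hab : a ≤ L * b)
    (hba : b ≤ L * a) (β : ℝ) : a ^ β ≤ L ^ |β| * b ^ β := by
  have hL : 0 < L := pos_of_mul_pos_left (ha.trans_le hab) hb.le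
  rcases le_or_gt 0 β with hβ | hβ
  · rw [abs_of_nonneg hβ, ← mul_rpow hL.le hb.le]
    exact rpow_le_rpow ha.le hab hβ
  · have hbL : b / L ≤ a := by rw [div_le_iff₀ hL, mul_comm]; exact hba
    calc a ^ β ≤ (b / L) ^ β := rpow_le_rpow_of_nonpos (div_pos hb hL) hbL hβ.le
      _ = L ^ |β| * b ^ β := by
        rw [div_rpow hb.le hL.le, abs_of_neg hβ, rpow_neg hL.le, div_eq_inv_mul]

lemma exists_one_add_log_rpow_le (b : ℝ) {ε : ℝ} (hb : 0 ≤ b) (hε : 0 < ε) :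
    ∃ C : ℝ, 0 < C ∧ ∀ u : ℝ, 1 ≤ u → (1 + log u) ^ b ≤ C * u ^ ε := by
  -- `ε / (b + 1)` rather than `ε / b`, so that `b = 0` needs no separate treatment
  set e := ε / (b + 1)
  have he : 0 < e := div_pos hε (by linarith)
  refine ⟨(1 + 1 / e) ^ b, by positivity, fun u hu => ?_⟩
  have hu0 : 0 < u := one_pos.trans_le hu
  have hlog : 1 + log u ≤ (1 + 1 / e) * u ^ e :=
    calc 1 + log u ≤ u ^ e + u ^ e / e :=
          add_le_add (one_le_rpow hu he.le) (log_le_rpow_div hu0.le he)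
      _ = (1 + 1 / e) * u ^ e := by ring
  have heb : e * b ≤ ε := by
    have : e * (b + 1) = ε := div_mul_cancel₀ ε (by linarith)
    nlinarith
  calc (1 + log u) ^ b ≤ ((1 + 1 / e) * u ^ e) ^ b :=
        rpow_le_rpow (by linarith [log_nonneg hu]) hlog hb
    _ = (1 + 1 / e) ^ b * u ^ (e * b) := by
        rw [mul_rpow (by positivity) (by positivity), rpow_mul hu0.le]
    _ ≤ (1 + 1 / e) ^ b * u ^ ε := by gcongr

lemma exists_phi_rpow_le (β : ℝ) {ε : ℝ} (hε : 0 < ε) :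
    ∃ C : ℝ, 0 < C ∧ ∀ ⦃s t : ℝ⦄, 0 < s → s ≤ t →
      phi s ^ β ≤ C * (t / s) ^ ε * phi t ^ β ∧
        phi t ^ β ≤ C * (t / s) ^ ε * phi s ^ β := by
  obtain ⟨C, hC, hlog⟩ := exists_one_add_log_rpow_le |β| (abs_nonneg β) hε
  refine ⟨C, hC, fun s t hs hst => ?_⟩
  set L := 1 + log (t / s)
  have hL : 1 ≤ L := le_add_of_nonneg_right (log_nonneg ((one_le_div hs).2 hst))
  have hst' := phi_le_one_add_log_mul_phi hs hst
  have hts : phi t ≤ L * phi s :=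
    (phi_le_phi hs hst).trans (le_mul_of_one_le_left (phi_pos s).le hL)
  have hLC : L ^ |β| ≤ C * (t / s) ^ ε := hlog _ ((one_le_div hs).2 hst)
  constructor
  · calc phi s ^ β ≤ L ^ |β| * phi t ^ β :=
          rpow_le_rpow_abs_mul_rpow (phi_pos s) (phi_pos t) hst' hts β
      _ ≤ C * (t / s) ^ ε * phi t ^ β :=
          mul_le_mul_of_nonneg_right hLC (rpow_nonneg (phi_pos t).le β)
  · calc phi t ^ β ≤ L ^ |β| * phi s ^ β :=
          rpow_le_rpow_abs_mul_rpow (phi_pos t) (phi_pos s) hts hst' β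
      _ ≤ C * (t / s) ^ ε * phi s ^ β :=
          mul_le_mul_of_nonneg_right hLC (rpow_nonneg (phi_pos s).le β)

def powPhi (α β ρ : ℝ) : ℝ := ρ ^ α * phi ρ ^ β

lemma powPhi_pos (α β : ℝ) {ρ : ℝ} (hρ : 0 < ρ) : 0 < powPhi α β ρ :=
  mul_pos (rpow_pos_of_pos hρ α) (rpow_pos_of_pos (phi_pos ρ) β)

lemma measurable_powPhi (α β : ℝ) : Measurable (powPhi α β) := by
  unfold powPhi phi
  fun_prop

lemma rpow_mul_powPhi (γ α β : ℝ) {ρ : ℝ} (hρ : 0 < ρ) :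
    ρ ^ γ * powPhi α β ρ = powPhi (γ + α) β ρ := by
  rw [powPhi, powPhi, rpow_add hρ, mul_assoc]

def IsQuasiIncreasing (f : ℝ → ℝ) : Prop :=
  ∃ C : ℝ, 0 < C ∧ ∀ ⦃s t : ℝ⦄, 0 < s → s ≤ t → f s ≤ C * f t

def IsQuasiDecreasing (f : ℝ → ℝ) : Prop :=
  ∃ C : ℝ, 0 < C ∧ ∀ ⦃s t : ℝ⦄, 0 < s → s ≤ t → f t ≤ C * f s

lemma isQuasiIncreasing_powPhi {α : ℝ} (hα : 0 < α) (β : ℝ) :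
    IsQuasiIncreasing (powPhi α β) := by
  obtain ⟨C, hC, hphi⟩ := exists_phi_rpow_le β hα
  refine ⟨C, hC, fun s t hs hst => ?_⟩
  have ht := hs.trans_le hst
  calc powPhi α β s ≤ s ^ α * (C * (t / s) ^ α * phi t ^ β) :=
        mul_le_mul_of_nonneg_left (hphi hs hst).1 (rpow_nonneg hs.le α)
    _ = C * powPhi α β t := by
        rw [powPhi, div_rpow ht.le hs.le]
        field_simp [(rpow_pos_of_pos hs α).ne']

lemma isQuasiIncreasing_rpow_mul_powPhi {α γ : ℝ} (h : 0 < γ + α) (β : ℝ) :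
    IsQuasiIncreasing fun s => s ^ γ * powPhi α β s := by
  obtain ⟨C, hC, hinc⟩ := isQuasiIncreasing_powPhi h β
  refine ⟨C, hC, fun s t hs hst => ?_⟩
  simpa only [rpow_mul_powPhi γ α β hs, rpow_mul_powPhi γ α β (hs.trans_le hst)] using
    hinc hs hst

lemma isQuasiDecreasing_powPhi {α β : ℝ} (h : α < 0 ∨ α = 0 ∧ 0 ≤ β) :
    IsQuasiDecreasing (powPhi α β) := by
  rcases h with hα | ⟨rfl, hβ⟩
  · obtain ⟨C, hC, hphi⟩ := exists_phi_rpow_le β (neg_pos.2 hα)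
    refine ⟨C, hC, fun s t hs hst => ?_⟩
    have ht := hs.trans_le hst
    calc powPhi α β t ≤ t ^ α * (C * (t / s) ^ (-α) * phi s ^ β) :=
          mul_le_mul_of_nonneg_left (hphi hs hst).2 (rpow_nonneg ht.le α)
      _ = C * powPhi α β s := by
          rw [powPhi, div_rpow ht.le hs.le, rpow_neg ht.le, rpow_neg hs.le]
          field_simp [(rpow_pos_of_pos ht α).ne']
  · refine ⟨1, one_pos, fun s t hs hst => ?_⟩
    simp only [powPhi, Real.rpow_zero, one_mul]
    exact rpow_le_rpow (phi_pos t).le (phi_le_phi hs hst) hβ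

lemma tendsto_powPhi_nhdsGT_zero {α β : ℝ} (h : 0 < α ∨ α = 0 ∧ β < 0) :
    Tendsto (powPhi α β) (𝓝[>] 0) (𝓝 0) := by
  rcases h with hα | ⟨rfl, hβ⟩
  · obtain ⟨C, -, hphi⟩ := exists_phi_rpow_le β (half_pos hα)
    have hbound : ∀ s ∈ Ioc (0 : ℝ) 1, powPhi α β s ≤ C * s ^ (α / 2) := by
      rintro s ⟨hs, hs1⟩
      calc powPhi α β s ≤ s ^ α * (C * (1 / s) ^ (α / 2) * phi 1 ^ β) :=
            mul_le_mul_of_nonneg_left (hphi hs hs1).1 (rpow_nonneg hs.le α)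
        _ = C * s ^ (α / 2) := by
            have hsplit : s ^ α = s ^ (α / 2) * s ^ (α / 2) := by
              rw [← rpow_add hs, add_halves]
            rw [phi_one, Real.one_rpow, mul_one, one_div, inv_rpow hs.le, hsplit]
            field_simp [(rpow_pos_of_pos hs (α / 2)).ne']
    have hlim : Tendsto (fun s : ℝ => C * s ^ (α / 2)) (𝓝[>] 0) (𝓝 0) := by
      have := ((Real.continuous_rpow_const (half_pos hα).le).tendsto 0).const_mul C
      rw [Real.zero_rpow (half_pos hα).ne', mul_zero] at this
      exact this.mono_left nhdsWithin_le_nhds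
    refine tendsto_of_tendsto_of_tendsto_of_le_of_le' tendsto_const_nhds hlim ?_ ?_
    · filter_upwards [self_mem_nhdsWithin] with s hs using (powPhi_pos α β hs).le
    · filter_upwards [Ioc_mem_nhdsGT one_pos] with s hs using hbound s hs
  · have hphi : Tendsto phi (𝓝[>] 0) atTop :=
      tendsto_atTop_mono (fun s => le_max_right _ _)
        (tendsto_neg_atBot_atTop.comp tendsto_log_nhdsGT_zero)
    have hpow : powPhi 0 β = (fun x => x ^ β) ∘ phi := by
      funext s; simp [powPhi]
    rw [hpow]
    simpa only [neg_neg] using (tendsto_rpow_neg_atTop (neg_pos.2 hβ)).comp hphi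

lemma IsQuasiIncreasing.exists_le_mul_div_rpow {f : ℝ → ℝ} {γ : ℝ}
    (hinc : IsQuasiIncreasing fun s => s ^ γ * f s) :
    ∃ C : ℝ, 0 < C ∧
      ∀ ⦃s t : ℝ⦄, 0 < s → s ≤ t → f s ≤ C * (t / s) ^ γ * f t := by
  obtain ⟨C, hC, hle⟩ := hinc
  refine ⟨C, hC, fun s t hs hst => ?_⟩
  have hsγ := rpow_pos_of_pos hs γ
  calc f s = (s ^ γ)⁻¹ * (s ^ γ * f s) := by field_simp
    _ ≤ (s ^ γ)⁻¹ * (C * (t ^ γ * f t)) :=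
        mul_le_mul_of_nonneg_left (hle hs hst) (inv_nonneg.2 hsγ.le)
    _ = C * (t / s) ^ γ * f t := by
        rw [div_rpow (hs.trans_le hst).le hs.le]; field_simp

lemma le_essInf_of_ae_le_of_integrableOn {X : Type*} [MeasurableSpace X] {μ : Measure X}
    {s : Set X} {f : X → ℝ} {c : ℝ} (hs₀ : μ s ≠ 0) (hs : μ s ≠ ∞)
    (hf : IntegrableOn f s μ) (h : ∀ᵐ x ∂μ.restrict s, c ≤ f x) :
    c ≤ essInf f (μ.restrict s) := by
  refine le_essInf_of_ae_le c h (IsCoboundedUnder.of_frequently_le (a := ⨍ x in s, f x ∂μ) ?_)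
  rw [frequently_ae_iff]
  refine ((measure_le_setAverage_pos hs₀ hs hf).trans_le ?_).ne'
  refine (measure_mono fun x hx => ?_).trans (Measure.le_restrict_apply _ _)
  exact ⟨hx.2, hx.1⟩

lemma setAverage_le_of_setIntegral_le {X : Type*} [MeasurableSpace X] {μ : Measure X}
    {s : Set X} {f : X → ℝ} {c : ℝ} (hs₀ : μ s ≠ 0) (hs : μ s ≠ ∞)
    (h : ∫ x in s, f x ∂μ ≤ c * μ.real s) : ⨍ x in s, f x ∂μ ≤ c := by
  have hpos : 0 < μ.real s := ENNReal.toReal_pos hs₀ hs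
  rwa [setAverage_eq, smul_eq_mul, inv_mul_le_iff₀ hpos, mul_comm]

def IsAOneWeight {X : Type*} [MetricSpace X] [MeasurableSpace X] (μ : Measure X) (w : X → ℝ) :
    Prop :=
  ∃ C : ℝ, 0 < C ∧ ∀ (x : X) (r : ℝ), 0 < r →
    (⨍ y in ball x r, w y ∂μ) ≤ C * essInf w (μ.restrict (ball x r))

section Radial

variable {E : Type*} [NormedAddCommGroup E] [NormedSpace ℝ E] [FiniteDimensional ℝ E]
  [MeasurableSpace E] [BorelSpace E] (μ : Measure E) [μ.IsAddHaarMeasure]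

lemma addHaar_real_ball_of_pos (x : E) {r : ℝ} (hr : 0 < r) :
    μ.real (ball x r) = r ^ finrank ℝ E * μ.real (ball 0 1) := by
  rw [measureReal_def, Measure.addHaar_ball_of_pos μ x hr, ENNReal.toReal_mul,
    ENNReal.toReal_ofReal (by positivity), measureReal_def]

lemma setIntegral_ball_zero_norm_rpow (p : ℝ) {R : ℝ} (hR : 0 < R) :
    ∫ x in ball (0 : E) R, ‖x‖ ^ p ∂μ =
      R ^ finrank ℝ E * R ^ p * ∫ x in ball (0 : E) 1, ‖x‖ ^ p ∂μ := by
  have h := μ.setIntegral_comp_smul_of_pos (fun x : E => ‖x‖ ^ p) (ball 0 1) hR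
  simp only [smul_unitBall_of_pos hR, smul_eq_mul, norm_smul, Real.norm_of_nonneg hR.le,
    mul_rpow hR.le (norm_nonneg _), integral_const_mul] at h
  rw [eq_inv_mul_iff_mul_eq₀ (by positivity)] at h
  rw [← h]; ring

lemma integrableOn_ball_zero_norm_rpow_neg [Nontrivial E] {γ : ℝ} (hγ : γ < finrank ℝ E)
    (R : ℝ) : IntegrableOn (fun x : E => ‖x‖ ^ (-γ)) (ball 0 R) μ :=
  integrableOn_ball_of_norm_le_rpow finrank_pos hγ
    (ae_of_all _ fun x => by
      rw [one_mul, Real.norm_of_nonneg (rpow_nonneg (norm_nonneg x) _)])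
    (measurable_norm.pow_const _).aestronglyMeasurable

variable [Nontrivial E] {f : ℝ → ℝ} {γ : ℝ}

lemma ae_le_mul_norm_rpow_neg {C : ℝ}
    (hle : ∀ ⦃s t : ℝ⦄, 0 < s → s ≤ t → f s ≤ C * (t / s) ^ γ * f t) (R : ℝ) :
    ∀ᵐ x ∂μ.restrict (ball (0 : E) R), f ‖x‖ ≤ C * R ^ γ * f R * ‖x‖ ^ (-γ) := by
  filter_upwards [ae_restrict_mem measurableSet_ball, ae_restrict_of_ae (μ.ae_ne 0)]
    with x hxR hx0
  have hx := norm_pos_iff.2 hx0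
  calc f ‖x‖ ≤ C * (R / ‖x‖) ^ γ * f R := hle hx (mem_ball_zero_iff.1 hxR).le
    _ = C * R ^ γ * f R * ‖x‖ ^ (-γ) := by
      rw [div_rpow (hx.trans (mem_ball_zero_iff.1 hxR)).le hx.le, rpow_neg hx.le]; ring

lemma integrableOn_ball_of_isQuasiIncreasing (hf : Measurable f)
    (hf₀ : ∀ s, 0 < s → 0 ≤ f s) (hγ : γ < finrank ℝ E)
    (hinc : IsQuasiIncreasing fun s => s ^ γ * f s) (x₀ : E) (r : ℝ) :
    IntegrableOn (fun x => f ‖x‖) (ball x₀ r) μ := by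
  obtain ⟨C, -, hle⟩ := hinc.exists_le_mul_div_rpow
  set R := ‖x₀‖ + r
  have hdom : ∀ᵐ x ∂μ.restrict (ball (0 : E) R),
      ‖f ‖x‖‖ ≤ C * R ^ γ * f R * ‖x‖ ^ (-γ) := by
    filter_upwards [ae_le_mul_norm_rpow_neg μ hle R, ae_restrict_of_ae (μ.ae_ne 0)]
      with x hx hx0
    rwa [Real.norm_of_nonneg (hf₀ _ (norm_pos_iff.2 hx0))]
  have hR : IntegrableOn (fun x => f ‖x‖) (ball 0 R) μ :=
    Integrable.mono' ((integrableOn_ball_zero_norm_rpow_neg μ hγ R).const_mul _)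
      (hf.comp measurable_norm).aestronglyMeasurable hdom
  exact hR.mono_set (ball_subset_ball' (by rw [dist_zero_right, add_comm]))

lemma exists_setIntegral_ball_zero_le (hf₀ : ∀ s, 0 < s → 0 ≤ f s)
    (hγ : γ < finrank ℝ E) (hinc : IsQuasiIncreasing fun s => s ^ γ * f s) :
    ∃ K : ℝ, 0 ≤ K ∧ ∀ R : ℝ, 0 < R →
      ∫ x in ball (0 : E) R, f ‖x‖ ∂μ ≤ K * f R * μ.real (ball 0 R) := by
  obtain ⟨C, hC, hle⟩ := hinc.exists_le_mul_div_rpow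
  set I := ∫ x in ball (0 : E) 1, ‖x‖ ^ (-γ) ∂μ
  set V := μ.real (ball (0 : E) 1) with hV_def
  have hV : 0 < V :=
    ENNReal.toReal_pos (measure_ball_pos μ 0 one_pos).ne' measure_ball_lt_top.ne
  have hI : 0 ≤ I :=
    setIntegral_nonneg measurableSet_ball fun x _ => rpow_nonneg (norm_nonneg x) _
  refine ⟨C * I / V, by positivity, fun R hR => ?_⟩
  have hRγ : R ^ γ * R ^ (-γ) = 1 := by rw [← rpow_add hR, add_neg_cancel, Real.rpow_zero]
  calc ∫ x in ball (0 : E) R, f ‖x‖ ∂μ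
      ≤ ∫ x in ball (0 : E) R, C * R ^ γ * f R * ‖x‖ ^ (-γ) ∂μ :=
        integral_mono_of_nonneg
          (ae_restrict_of_ae (μ.ae_ne 0) |>.mono fun x hx => hf₀ _ (norm_pos_iff.2 hx))
          ((integrableOn_ball_zero_norm_rpow_neg μ hγ R).const_mul _)
          (ae_le_mul_norm_rpow_neg μ hle R)
    _ = C * f R * I * R ^ finrank ℝ E * (R ^ γ * R ^ (-γ)) := by
        rw [integral_const_mul, setIntegral_ball_zero_norm_rpow μ _ hR]; ring
    _ = C * I / V * f R * μ.real (ball 0 R) := by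
        rw [hRγ, addHaar_real_ball_of_pos μ 0 hR, ← hV_def]; field_simp

lemma exists_setAverage_ball_le_of_isQuasiDecreasing (hf : Measurable f)
    (hf₀ : ∀ s, 0 < s → 0 ≤ f s) (hγ₀ : 0 ≤ γ) (hγ : γ < finrank ℝ E)
    (hinc : IsQuasiIncreasing fun s => s ^ γ * f s) (hdec : IsQuasiDecreasing f) :
    ∃ A : ℝ, 0 < A ∧ ∀ (x₀ : E) (r : ℝ), 0 < r →
      ⨍ y in ball x₀ r, f ‖y‖ ∂μ ≤ A * f (‖x₀‖ + r) := by
  obtain ⟨K, hK, hKle⟩ := exists_setIntegral_ball_zero_le μ hf₀ hγ hinc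
  obtain ⟨C₁, -, hdec⟩ := hdec
  obtain ⟨C₂, hC₂, hle⟩ := hinc.exists_le_mul_div_rpow
  set n := finrank ℝ E
  refine ⟨max (3 ^ n * K * C₁) (C₂ * 3 ^ γ), lt_max_of_lt_right (by positivity),
    fun x₀ r hr => ?_⟩
  set M := ‖x₀‖ + r
  have hM : 0 < M := by positivity
  have hB := measure_ball_pos μ x₀ hr
  have hint := integrableOn_ball_of_isQuasiIncreasing μ hf hf₀ hγ hinc
  refine setAverage_le_of_setIntegral_le hB.ne' measure_ball_lt_top.ne ?_
  rcases le_or_gt ‖x₀‖ (2 * r) with hnear | hfar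
  · have hsub : ball x₀ r ⊆ ball 0 (3 * r) :=
      ball_subset_ball' (by rw [dist_zero_right]; linarith)
    calc ∫ y in ball x₀ r, f ‖y‖ ∂μ ≤ ∫ y in ball 0 (3 * r), f ‖y‖ ∂μ :=
          setIntegral_mono_set (hint 0 (3 * r))
            (ae_restrict_of_ae (μ.ae_ne 0) |>.mono fun x hx => hf₀ _ (norm_pos_iff.2 hx))
            hsub.eventuallyLE
      _ ≤ K * f (3 * r) * μ.real (ball 0 (3 * r)) := hKle _ (by positivity)
      _ = 3 ^ n * K * f (3 * r) * μ.real (ball x₀ r) := by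
          rw [addHaar_real_ball_of_pos μ 0 (by positivity), addHaar_real_ball_of_pos μ x₀ hr,
            mul_pow]; ring
      _ ≤ 3 ^ n * K * (C₁ * f M) * μ.real (ball x₀ r) := by
          gcongr; exact hdec hM (by linarith)
      _ ≤ max (3 ^ n * K * C₁) (C₂ * 3 ^ γ) * f M * μ.real (ball x₀ r) := by
          rw [← mul_assoc]; gcongr
          · exact hf₀ M hM
          · exact le_max_left _ _
  · have hbound : ∀ y ∈ ball x₀ r, f ‖y‖ ≤ C₂ * 3 ^ γ * f M := by
      intro y hy
      have hyM : ‖y‖ < M := norm_lt_of_mem_ball hy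
      have hy3 : M < 3 * ‖y‖ := by
        have := norm_sub_norm_le x₀ y
        rw [← dist_eq_norm, dist_comm] at this
        linarith [mem_ball.1 hy]
      have hy0 : 0 < ‖y‖ := by linarith
      calc f ‖y‖ ≤ C₂ * (M / ‖y‖) ^ γ * f M := hle hy0 hyM.le
        _ ≤ C₂ * 3 ^ γ * f M := by
          gcongr
          · exact hf₀ M hM
          · rw [div_le_iff₀ hy0]; linarith
    calc ∫ y in ball x₀ r, f ‖y‖ ∂μ
        ≤ ∫ _ in ball x₀ r, C₂ * 3 ^ γ * f M ∂μ :=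
          setIntegral_mono_on (hint x₀ r) (integrableOn_const measure_ball_lt_top.ne)
            measurableSet_ball hbound
      _ = C₂ * 3 ^ γ * f M * μ.real (ball x₀ r) := by
          rw [setIntegral_const, smul_eq_mul, mul_comm]
      _ ≤ max (3 ^ n * K * C₁) (C₂ * 3 ^ γ) * f M * μ.real (ball x₀ r) := by
          gcongr
          · exact hf₀ M hM
          · exact le_max_right _ _

lemma exists_le_mul_essInf_ball_of_isQuasiDecreasing
    (hint : ∀ (x₀ : E) (r : ℝ), IntegrableOn (fun x => f ‖x‖) (ball x₀ r) μ)
    (hdec : IsQuasiDecreasing f) :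
    ∃ C : ℝ, 0 < C ∧ ∀ (x₀ : E) (r : ℝ), 0 < r →
      f (‖x₀‖ + r) ≤ C * essInf (fun x => f ‖x‖) (μ.restrict (ball x₀ r)) := by
  obtain ⟨C, hC, hdec⟩ := hdec
  refine ⟨C, hC, fun x₀ r hr => ?_⟩
  rw [← div_le_iff₀' hC]
  refine le_essInf_of_ae_le_of_integrableOn (measure_ball_pos μ x₀ hr).ne'
    measure_ball_lt_top.ne (hint x₀ r) ?_
  filter_upwards [ae_restrict_mem measurableSet_ball, ae_restrict_of_ae (μ.ae_ne 0)]
    with y hy hy0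
  rw [div_le_iff₀' hC]
  exact hdec (norm_pos_iff.2 hy0) (norm_lt_of_mem_ball hy).le

theorem isAOneWeight_of_isQuasiDecreasing (hf : Measurable f) (hf₀ : ∀ s, 0 < s → 0 ≤ f s)
    (hγ₀ : 0 ≤ γ) (hγ : γ < finrank ℝ E) (hinc : IsQuasiIncreasing fun s => s ^ γ * f s)
    (hdec : IsQuasiDecreasing f) : IsAOneWeight μ fun x : E => f ‖x‖ := by
  obtain ⟨A, hA, havg⟩ :=
    exists_setAverage_ball_le_of_isQuasiDecreasing μ hf hf₀ hγ₀ hγ hinc hdec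
  obtain ⟨C, hC, hinf⟩ := exists_le_mul_essInf_ball_of_isQuasiDecreasing μ
    (integrableOn_ball_of_isQuasiIncreasing μ hf hf₀ hγ hinc) hdec
  refine ⟨A * C, mul_pos hA hC, fun x₀ r hr => ?_⟩
  calc ⨍ y in ball x₀ r, f ‖y‖ ∂μ ≤ A * f (‖x₀‖ + r) := havg x₀ r hr
    _ ≤ A * (C * essInf (fun x => f ‖x‖) (μ.restrict (ball x₀ r))) :=
        mul_le_mul_of_nonneg_left (hinf x₀ r hr) hA.le
    _ = A * C * essInf (fun x => f ‖x‖) (μ.restrict (ball x₀ r)) := (mul_assoc _ _ _).symm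

theorem not_isAOneWeight_of_tendsto_zero (hf_pos : ∀ s, 0 < s → 0 < f s)
    (hint : IntegrableOn (fun x : E => f ‖x‖) (ball 0 1) μ)
    (hlim : Tendsto f (𝓝[>] 0) (𝓝 0)) : ¬ IsAOneWeight μ fun x : E => f ‖x‖ := by
  rintro ⟨C, hC, hA₁⟩
  have hpos : ∀ᵐ x ∂μ.restrict (ball (0 : E) 1), 0 < f ‖x‖ :=
    ae_restrict_of_ae (μ.ae_ne 0) |>.mono fun x hx => hf_pos _ (norm_pos_iff.2 hx)
  have hinf : essInf (fun x => f ‖x‖) (μ.restrict (ball (0 : E) 1)) ≤ 0 := by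
    refine le_of_forall_pos_le_add fun ε hε => ?_
    obtain ⟨ρ, hρ, hsmall⟩ :=
      mem_nhdsGT_iff_exists_Ioo_subset.1 ((tendsto_order.1 hlim).2 ε hε)
    set ρ' := min ρ 1
    have hρ' : 0 < ρ' := lt_min hρ one_pos
    have hle : ∀ᵐ x ∂μ.restrict (ball (0 : E) ρ'), f ‖x‖ ≤ ε := by
      filter_upwards [ae_restrict_mem measurableSet_ball, ae_restrict_of_ae (μ.ae_ne 0)]
        with x hx hx0
      have hxρ : ‖x‖ < ρ := (mem_ball_zero_iff.1 hx).trans_le (min_le_left _ _)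
      exact (hsmall ⟨norm_pos_iff.2 hx0, hxρ⟩).le
    have := ae_restrict_neBot.2 (measure_ball_pos μ (0 : E) hρ').ne'
    rw [zero_add]
    exact liminf_le_of_frequently_le
      (hle.frequently.filter_mono
        (ae_mono (Measure.restrict_mono (ball_subset_ball (min_le_right _ _)) le_rfl)))
      ⟨0, eventually_map.2 (hpos.mono fun x hx => hx.le)⟩
  have havg : 0 < ⨍ x in ball (0 : E) 1, f ‖x‖ ∂μ := by
    rw [setAverage_eq, smul_eq_mul]
    refine mul_pos (inv_pos.2 (ENNReal.toReal_pos (measure_ball_pos μ 0 one_pos).ne'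
      measure_ball_lt_top.ne)) ?_
    rw [setIntegral_pos_iff_support_of_nonneg_ae (hpos.mono fun x hx => hx.le) hint]
    calc 0 < μ (ball (0 : E) 1) := measure_ball_pos μ 0 one_pos
      _ = μ (ball (0 : E) 1 \ {0}) := (measure_sdiff_null (measure_singleton 0)).symm
      _ ≤ μ ((Function.support fun x : E => f ‖x‖) ∩ ball 0 1) :=
          measure_mono fun x hx => ⟨(hf_pos _ (norm_pos_iff.2 hx.2)).ne', hx.1⟩
  have := hA₁ 0 1 one_pos
  nlinarith [mul_nonpos_of_nonneg_of_nonpos hC.le hinf]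

theorem isAOneWeight_powPhi_norm_iff {α β : ℝ} (hα : -(finrank ℝ E : ℝ) < α) :
    IsAOneWeight μ (fun x : E => powPhi α β ‖x‖) ↔ α < 0 ∨ α = 0 ∧ 0 ≤ β := by
  have hn : (0 : ℝ) < finrank ℝ E := by exact_mod_cast finrank_pos
  set γ := max 0 ((finrank ℝ E - α) / 2)
  have hγ₀ : 0 ≤ γ := le_max_left _ _
  have hγ : γ < finrank ℝ E := max_lt hn (by linarith)
  have hinc : IsQuasiIncreasing fun s => s ^ γ * powPhi α β s :=
    isQuasiIncreasing_rpow_mul_powPhi (by linarith [le_max_right 0 ((finrank ℝ E - α) / 2)]) β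
  have hpos : ∀ s, 0 < s → 0 < powPhi α β s := fun s hs => powPhi_pos α β hs
  refine ⟨fun hA₁ => ?_, fun h => isAOneWeight_of_isQuasiDecreasing μ (measurable_powPhi α β)
    (fun s hs => (hpos s hs).le) hγ₀ hγ hinc (isQuasiDecreasing_powPhi h)⟩
  by_contra! hbad
  refine not_isAOneWeight_of_tendsto_zero μ hpos
    (integrableOn_ball_of_isQuasiIncreasing μ (measurable_powPhi α β)
      (fun s hs => (hpos s hs).le) hγ hinc 0 1) (tendsto_powPhi_nhdsGT_zero ?_) hA₁
  rcases hbad.1.lt_or_eq with hα₀ | hα₀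
  · exact Or.inl hα₀
  · exact Or.inr ⟨hα₀.symm, hbad.2 hα₀.symm⟩

end Radial

lemma isApWeight_one_iff {X : Type*} [MetricSpace X] [MeasureSpace X] (w : X → ℝ) :
    IsApWeight 1 w ↔ IsAOneWeight volume w :=
  ⟨fun h => (h.resolve_right fun h => lt_irrefl _ h.1).2, fun h => Or.inl ⟨rfl, h⟩⟩

theorem statement14 (n : ℕ) (hn : 1 ≤ n) (α β : ℝ) (hα : -(n : ℝ) < α)
    (w : En n → ℝ) (hw : ∀ x, w x = ‖x‖ ^ α * phi ‖x‖ ^ β) :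
    IsApWeight 1 w ↔ (α < 0 ∨ (α = 0 ∧ 0 ≤ β)) := by
  have : Nonempty (Fin n) := ⟨⟨0, hn⟩⟩
  obtain rfl : w = fun x => powPhi α β ‖x‖ := funext hw
  rw [isApWeight_one_iff]
  exact isAOneWeight_powPhi_norm_iff volume (by simpa using hα)
end
end
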